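/- arXiv:2312.12221 — 4 statements merged into one kernel-verified Lean document; each statement's English description precedes it below -/
import Mathlib

section
/- Let E ∈ M_{N×N}(ℝ) be the matrix with entries E_{ij} = exp(-|x_i - x_j|) for real numbers x_1 < x_2 < ... < x_N. Then det E = ∏_{i=1}^{N-1} (1 - E_{i,i+1}²), and in particular det E > 0. -/
open Finset Real Matrix

private lemma peakon_aux : ∀ (n : ℕ) (x : ℕ → ℝ),
    (∀ i j, i < j → j < n → x i < x j) →
    (Matrix.of fun i j : Fin n => Real.exp (-|x i - x j|)).det
      = ∏ i ∈ Finset.range (n - 1), (1 - Real.exp (-|x i - x (i + 1)|) ^ 2) := by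
  intro n
  induction n with
  | zero => intro x hx; simp [Matrix.det_fin_zero]
  | succ n ih =>
    intro x hx
    match n with
    | 0 => simp [Matrix.det_fin_one]
    | Nat.succ m =>
      set c : ℝ := Real.exp (-|x m - x (m + 1)|) with hc
      have hxm : x m < x (m + 1) := hx m (m + 1) (by omega) (by omega)
      set M : Matrix (Fin (m + 2)) (Fin (m + 2)) ℝ :=
        Matrix.of fun i j : Fin (m + 2) => Real.exp (-|x i - x j|) with hM
      have hne : Fin.last (m + 1) ≠ Fin.castSucc (Fin.last m) := by
        simp [Fin.ext_iff]
      have key : (M.updateRow (Fin.last (m + 1))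
          (M (Fin.last (m + 1)) + (-c) • M (Fin.castSucc (Fin.last m)))).det = M.det :=
        Matrix.det_updateRow_add_smul_self M hne (-c)
      set M' := M.updateRow (Fin.last (m + 1))
          (M (Fin.last (m + 1)) + (-c) • M (Fin.castSucc (Fin.last m))) with hM'
      have hcval : c = Real.exp (-(x (m + 1) - x m)) := by
        rw [hc, abs_sub_comm, abs_of_nonneg (by linarith)]
      have hrow : ∀ j : Fin (m + 2), M' (Fin.last (m + 1)) j =
          if j = Fin.last (m + 1) then 1 - c ^ 2 else 0 := by
        intro j
        rw [hM', Matrix.updateRow_self]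
        by_cases hj : j = Fin.last (m + 1)
        · subst hj
          rw [if_pos rfl]
          simp only [Pi.add_apply, Pi.smul_apply, smul_eq_mul, hM,
            Matrix.of_apply, Fin.val_last, Fin.coe_castSucc]
          rw [sub_self, abs_zero, neg_zero, Real.exp_zero, hc]
          ring
        · have hjlt : (j : ℕ) < m + 1 := by
            have := j.isLt
            have : (j : ℕ) ≠ m + 1 := fun h => hj (Fin.ext (by simp [h]))
            omega
          have hxj : x j ≤ x m := by
            rcases Nat.lt_or_ge (j : ℕ) m with h | h
            · exact (hx j m h (by omega)).le
            · have : (j : ℕ) = m := by omega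
              rw [this]
          have hxj1 : x j < x (m + 1) := hx j (m + 1) hjlt (by omega)
          simp only [if_neg hj, Pi.add_apply, Pi.smul_apply, smul_eq_mul, hM,
            Matrix.of_apply, Fin.val_last, Fin.coe_castSucc]
          rw [abs_of_nonneg (by linarith : (0:ℝ) ≤ x (m + 1) - x j),
            abs_of_nonneg (by linarith : (0:ℝ) ≤ x m - x j), hcval,
            neg_mul, ← Real.exp_add]
          have heq : -(x (m + 1) - x m) + -(x m - x (j : ℕ)) = -(x (m + 1) - x (j : ℕ)) := by
            ring
          rw [heq, add_neg_cancel]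
      have hsub : M'.submatrix (Fin.last (m + 1)).succAbove (Fin.last (m + 1)).succAbove
          = Matrix.of fun i j : Fin (m + 1) => Real.exp (-|x i - x j|) := by
        ext i j
        simp only [Matrix.submatrix_apply, Fin.succAbove_last]
        rw [hM', Matrix.updateRow_ne (Fin.castSucc_lt_last i).ne, hM]
        simp
      have hdet : M'.det = (1 - c ^ 2) *
          (Matrix.of fun i j : Fin (m + 1) => Real.exp (-|x i - x j|)).det := by
        rw [Matrix.det_succ_row M' (Fin.last (m + 1))]
        rw [Finset.sum_eq_single_of_mem (Fin.last (m + 1)) (Finset.mem_univ _)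
          (by intro j _ hj; rw [hrow j, if_neg hj]; ring)]
        rw [hrow, if_pos rfl, hsub, Fin.val_last]
        have : ((-1 : ℝ)) ^ (m + 1 + (m + 1)) = 1 := Even.neg_one_pow ⟨m + 1, rfl⟩
        rw [this]; ring
      have ihval := ih x (fun i j hij hj => hx i j hij (by omega))
      rw [← key, hdet, ihval]
      rw [Nat.succ_sub_one, Nat.succ_sub_one, Finset.prod_range_succ]
      rw [hc]
      ring

theorem det_peakon_exp_matrix (N : ℕ) (x : ℕ → ℝ)
    (hx : ∀ i j, i < j → j < N → x i < x j) :
    (Matrix.of fun i j : Fin N => Real.exp (-|x i - x j|)).det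
        = ∏ i ∈ Finset.range (N - 1), (1 - Real.exp (-|x i - x (i + 1)|) ^ 2) ∧
      0 < (Matrix.of fun i j : Fin N => Real.exp (-|x i - x j|)).det := by
  have h := peakon_aux N x hx
  refine ⟨h, ?_⟩
  rw [h]
  apply Finset.prod_pos
  intro i hi
  have hi' : i < N - 1 := Finset.mem_range.mp hi
  have hlt : x i < x (i + 1) := hx i (i + 1) (by omega) (by omega)
  have habs : 0 < |x i - x (i + 1)| := abs_pos.mpr (by linarith)
  have hexp : Real.exp (-|x i - x (i + 1)|) < 1 := by
    rw [← Real.exp_zero]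
    exact Real.exp_lt_exp.mpr (by linarith)
  have : Real.exp (-|x i - x (i + 1)|) ^ 2 < 1 :=
    pow_lt_one₀ (Real.exp_nonneg _) hexp (by norm_num)
  linarith
end

section
/- With K the 4×4 matrix in 1+2+1 block form [[0,0,1],[0,2σ,0],[1,0,0]] where σ = [[0,1],[1,0]], and J = diag(1, -1, -1, 1), the NV2 transition matrix S_k satisfies K⁻¹ S_k(λ)ᵀ K = S_k(-λ) and S_k(λ)⁻¹ = J S_k(λ) J, and consequently S_k(-λ)ᵀ (KJ) S_k(λ) (KJ)⁻¹ = I₄. -/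
open Matrix
/-- The NV2 transition matrix `S_k(λ)` with mass `(m, n)` and position `x`,
written out in the 1+2+1 block decomposition. -/
noncomputable def transitionS (m n x l : ℝ) : Matrix (Fin 4) (Fin 4) ℝ :=
  !![1 - l * (2 * m * n), -2 * l * n * Real.exp (-x), -2 * l * m * Real.exp (-x),
        -l ^ 2 * (2 * m * n) * Real.exp (-2 * x);
     m * Real.exp x, 1, 0, l * m * Real.exp (-x);
     n * Real.exp x, 0, 1, l * n * Real.exp (-x);
     (2 * m * n) * Real.exp (2 * x), 2 * n * Real.exp x, 2 * m * Real.exp x,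
        1 + l * (2 * m * n)]

/-- The matrix `K = [[0,0,1],[0,2σ,0],[1,0,0]]` in the 1+2+1 block form,
with `σ = [[0,1],[1,0]]`. -/
def matK : Matrix (Fin 4) (Fin 4) ℝ :=
  !![0, 0, 0, 1;
     0, 0, 2, 0;
     0, 2, 0, 0;
     1, 0, 0, 0]

/-- The matrix `J = diag(1, -1, -1, 1)`. -/
def matJ : Matrix (Fin 4) (Fin 4) ℝ :=
  !![1, 0, 0, 0;
     0, -1, 0, 0;
     0, 0, -1, 0;
     0, 0, 0, 1]

/-!
The first two identities are finite matrix computations once `exp (±2x)` is written as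
`(exp x) ^ (±2)`. The third is formal: transposing the first gives `S(-λ)ᵀ = K S(λ) K⁻¹`, since `K`
is symmetric, and the second says `S(λ) J S(λ) J = 1`.
-/

namespace Matrix

variable {ι R : Type*} [Fintype ι] [DecidableEq ι] [CommRing R]

theorem transpose_mul_mul_mul_inv_eq_one {K J S S' : Matrix ι ι R} (hK : IsUnit K.det)
    (hKt : Kᵀ = K) (hJ : J * J = 1) (hS' : K⁻¹ * Sᵀ * K = S') (hS : S * (J * S * J) = 1) :
    S'ᵀ * (K * J) * S * (K * J)⁻¹ = 1 := by
  have hS't : S'ᵀ = K * S * K⁻¹ := by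
    rw [← hS', transpose_mul, transpose_mul, transpose_transpose, transpose_nonsing_inv, hKt,
      Matrix.mul_assoc]
  have hKJ : (K * J)⁻¹ = J * K⁻¹ := by
    rw [Matrix.mul_inv_rev, inv_eq_left_inv hJ]
  calc S'ᵀ * (K * J) * S * (K * J)⁻¹
      = K * S * (K⁻¹ * K) * J * S * J * K⁻¹ := by
        rw [hS't, hKJ]; simp only [Matrix.mul_assoc]
    _ = K * (S * (J * S * J)) * K⁻¹ := by
        rw [nonsing_inv_mul _ hK]; simp only [Matrix.mul_one, Matrix.mul_assoc]
    _ = 1 := by rw [hS, Matrix.mul_one, mul_nonsing_inv _ hK]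

end Matrix

theorem matK_inv : matK⁻¹ = !![0, 0, 0, 1; 0, 0, 1 / 2, 0; 0, 1 / 2, 0, 0; 1, 0, 0, 0] := by
  refine inv_eq_right_inv ?_
  ext i j
  fin_cases i <;> fin_cases j <;> simp [matK, mul_apply, Fin.sum_univ_four]

theorem isUnit_det_matK : IsUnit matK.det := by
  simp [matK, det_succ_row_zero, Fin.sum_univ_succ, Fin.succAbove]

theorem matK_transpose : matKᵀ = matK := by
  ext i j; fin_cases i <;> fin_cases j <;> rfl

theorem matJ_mul_self : matJ * matJ = 1 := by
  ext i j
  fin_cases i <;> fin_cases j <;> simp [matJ, mul_apply, Fin.sum_univ_four]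

theorem transitionS_eq (m n x l : ℝ) :
    transitionS m n x l =
      !![1 - l * (2 * m * n), -2 * l * n * (Real.exp x)⁻¹, -2 * l * m * (Real.exp x)⁻¹,
          -l ^ 2 * (2 * m * n) * (Real.exp x)⁻¹ ^ 2;
        m * Real.exp x, 1, 0, l * m * (Real.exp x)⁻¹;
        n * Real.exp x, 0, 1, l * n * (Real.exp x)⁻¹;
        (2 * m * n) * Real.exp x ^ 2, 2 * n * Real.exp x, 2 * m * Real.exp x,
          1 + l * (2 * m * n)] := by
  have h2 : Real.exp (2 * x) = Real.exp x ^ 2 := by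
    rw [← Real.exp_nat_mul]; norm_num
  have h2' : Real.exp (-2 * x) = (Real.exp x)⁻¹ ^ 2 := by
    rw [← Real.exp_neg, ← Real.exp_nat_mul]; ring_nf
  simp only [transitionS, h2, h2', Real.exp_neg]

theorem matK_inv_mul_transitionS_transpose_mul_matK (m n x l : ℝ) :
    matK⁻¹ * (transitionS m n x l)ᵀ * matK = transitionS m n x (-l) := by
  rw [matK_inv]
  ext i j
  fin_cases i <;> fin_cases j <;>
    simp only [mul_apply, Fin.sum_univ_four, transpose_apply] <;>
    simp [transitionS_eq, matK] <;> ring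

theorem transitionS_mul_matJ_conj (m n x l : ℝ) :
    transitionS m n x l * (matJ * transitionS m n x l * matJ) = 1 := by
  have he : Real.exp x ≠ 0 := (Real.exp_pos x).ne'
  ext i j
  fin_cases i <;> fin_cases j <;>
    simp only [mul_apply, Fin.sum_univ_four] <;>
    simp [transitionS_eq, matJ, one_apply] <;> field_simp <;> ring

theorem transitionS_symmetries_general (m n x : ℝ) :
    (∀ l : ℝ, matK⁻¹ * (transitionS m n x l)ᵀ * matK = transitionS m n x (-l)) ∧
    (∀ l : ℝ, (transitionS m n x l)⁻¹ = matJ * transitionS m n x l * matJ) ∧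
    (∀ l : ℝ, (transitionS m n x (-l))ᵀ * (matK * matJ) * transitionS m n x l *
        (matK * matJ)⁻¹ = 1) :=
  ⟨matK_inv_mul_transitionS_transpose_mul_matK m n x,
    fun l => inv_eq_right_inv (transitionS_mul_matJ_conj m n x l),
    fun l => transpose_mul_mul_mul_inv_eq_one isUnit_det_matK matK_transpose matJ_mul_self
      (matK_inv_mul_transitionS_transpose_mul_matK m n x l) (transitionS_mul_matJ_conj m n x l)⟩

theorem transitionS_symmetries (m n x : ℝ) (hm : 0 < m) (hn : 0 < n) :
    (∀ l : ℝ, matK⁻¹ * (transitionS m n x l)ᵀ * matK = transitionS m n x (-l)) ∧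
    (∀ l : ℝ, (transitionS m n x l)⁻¹ = matJ * transitionS m n x l * matJ) ∧
    (∀ l : ℝ, (transitionS m n x (-l))ᵀ * (matK * matJ) * transitionS m n x l *
        (matK * matJ)⁻¹ = 1) :=
  transitionS_symmetries_general m n x
end

section
/- Let λ₁ > λ₂ > ... > λ_N > 0 and b₁, ..., b_N ∈ ℝ² with all components positive, and set W(λ) = ∑_k b_k/(λ - λ_k), Z(λ) = ∑_k c_k/(λ - λ_k) where c_k = ∑_p ⟨b_k, b_p⟩/(λ_k + λ_p). Then the identity Z(λ) + Z(-λ) + ⟨W(-λ), W(λ)⟩ = 0 holds for all λ ∉ {±λ₁, ..., ±λ_N}. -/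
/-- The symmetric bilinear form `⟨u,w⟩ = u₁w₂ + u₂w₁` on `ℝ²`. -/
def bform (u w : ℝ × ℝ) : ℝ := u.1 * w.2 + u.2 * w.1

lemma bform_sum_sum {N : ℕ} (u v : Fin N → ℝ × ℝ) :
    bform (∑ i, u i) (∑ j, v j) = ∑ i, ∑ j, bform (u i) (v j) := by
  simp only [bform, Prod.fst_sum, Prod.snd_sum, Finset.sum_mul_sum,
    ← Finset.sum_add_distrib]

theorem weyl_partial_fraction_symmetry (N : ℕ) (lam : Fin N → ℝ)
    (b : Fin N → ℝ × ℝ)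
    (hlam : ∀ i j : Fin N, i < j → lam j < lam i)
    (hpos : ∀ i, 0 < lam i)
    (hb : ∀ i, 0 < (b i).1 ∧ 0 < (b i).2)
    (c : Fin N → ℝ)
    (hc : ∀ k, c k = ∑ p, bform (b k) (b p) / (lam k + lam p))
    (W : ℝ → ℝ × ℝ) (Z : ℝ → ℝ)
    (hW : ∀ x, W x = ∑ k, (x - lam k)⁻¹ • b k)
    (hZ : ∀ x, Z x = ∑ k, c k / (x - lam k)) :
    ∀ x : ℝ, (∀ k, x ≠ lam k ∧ x ≠ -lam k) →
      Z x + Z (-x) + bform (W (-x)) (W x) = 0 := by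
  intro x hx
  have hne1 : ∀ k, x - lam k ≠ 0 := fun k => sub_ne_zero.2 (hx k).1
  have hne2 : ∀ k, -x - lam k ≠ 0 := by
    intro k h
    exact (hx k).2 (by linarith [sub_eq_zero.1 h] <;> linarith)
  have hne3 : ∀ k p : Fin N, lam k + lam p ≠ 0 := fun k p =>
    ne_of_gt (by have := hpos k; have := hpos p; linarith)
  have e2 : Z x = ∑ k, ∑ p, bform (b k) (b p) / ((lam k + lam p) * (x - lam p)) := by
    rw [hZ]
    have : (∑ k, c k / (x - lam k))
        = ∑ k, ∑ p, bform (b k) (b p) / ((lam k + lam p) * (x - lam k)) := by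
      refine Finset.sum_congr rfl fun k _ => ?_
      rw [hc k, Finset.sum_div]
      exact Finset.sum_congr rfl fun p _ => by rw [div_div]
    rw [this, Finset.sum_comm]
    refine Finset.sum_congr rfl fun k _ => Finset.sum_congr rfl fun p _ => ?_
    simp only [bform]; ring
  have e1 : Z (-x) = ∑ k, ∑ p, bform (b k) (b p) / ((lam k + lam p) * (-x - lam k)) := by
    rw [hZ]
    refine Finset.sum_congr rfl fun k _ => ?_
    rw [hc k, Finset.sum_div]
    exact Finset.sum_congr rfl fun p _ => by rw [div_div]
  have e3 : bform (W (-x)) (W x)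
      = ∑ k, ∑ p, ((-x - lam k)⁻¹ * (x - lam p)⁻¹) * bform (b k) (b p) := by
    rw [hW, hW, bform_sum_sum]
    refine Finset.sum_congr rfl fun k _ => Finset.sum_congr rfl fun p _ => ?_
    simp only [bform, Prod.smul_fst, Prod.smul_snd, smul_eq_mul]
    ring
  rw [e1, e2, e3, ← Finset.sum_add_distrib, ← Finset.sum_add_distrib]
  refine Finset.sum_eq_zero fun k _ => ?_
  rw [← Finset.sum_add_distrib, ← Finset.sum_add_distrib]
  refine Finset.sum_eq_zero fun p _ => ?_
  have h1 := hne1 p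
  have h2 := hne2 k
  have h3 := hne3 k p
  field_simp
  ring
end

section
/- Let λ₁ > λ₂ > 0 and b₁ = (b₁₁, b₁₂), b₂ = (b₂₁, b₂₂) ∈ ℝ² with all entries positive. Define F₂^{(i,j)} = det[(I_{i+p, j+q})_{p,q=0,1}] where I_{i,j} = ∑_{p,q∈{1,2}} λ_p^i λ_q^j ⟨b_p, b_q⟩/(λ_p + λ_q). Then F₂^{(i,j)} = ((λ₁-λ₂)²/(λ₁+λ₂)²) (λ₁λ₂)^{i+j-1} (b₁₁b₂₂λ₁ - b₁₂b₂₁λ₂)(b₁₂b₂₁λ₁ - b₁₁b₂₂λ₂). -/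
theorem F2_factorization (l₁ l₂ : ℝ) (hl : l₁ > l₂) (hl₂ : l₂ > 0)
    (b₁ b₂ : ℝ × ℝ) (hb₁ : 0 < b₁.1 ∧ 0 < b₁.2) (hb₂ : 0 < b₂.1 ∧ 0 < b₂.2)
    (lam : Fin 2 → ℝ) (hlam : lam = ![l₁, l₂])
    (b : Fin 2 → ℝ × ℝ) (hb : b = ![b₁, b₂])
    (I : ℕ → ℕ → ℝ)
    (hI : ∀ i j, I i j =
      ∑ p : Fin 2, ∑ q : Fin 2, lam p ^ i * lam q ^ j * bform (b p) (b q) / (lam p + lam q))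
    (i j : ℕ) :
    (!![I i j, I i (j + 1); I (i + 1) j, I (i + 1) (j + 1)]).det
      = ((l₁ - l₂) ^ 2 / (l₁ + l₂) ^ 2) * (l₁ * l₂) ^ ((i : ℤ) + (j : ℤ) - 1) *
        (b₁.1 * b₂.2 * l₁ - b₁.2 * b₂.1 * l₂) * (b₁.2 * b₂.1 * l₁ - b₁.1 * b₂.2 * l₂) := by
  have h1 : (0:ℝ) < l₁ := hl₂.trans hl
  have hll : l₁ * l₂ ≠ 0 := by positivity
  have h11 : l₁ + l₁ ≠ 0 := by positivity
  have h22 : l₂ + l₂ ≠ 0 := by positivity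
  have h12 : l₁ + l₂ ≠ 0 := by positivity
  rw [show ((i:ℤ) + (j:ℤ) - 1) = ((i + j : ℕ) : ℤ) - 1 by push_cast; ring,
    zpow_sub₀ hll, zpow_natCast, zpow_one]
  rw [Matrix.det_fin_two_of, hI, hI, hI, hI]
  simp only [hlam, hb, Fin.sum_univ_two, Matrix.cons_val_zero, Matrix.cons_val_one,
    Matrix.head_cons, bform]
  field_simp
  ring
end
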